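/- arXiv:2310.12662 — 5 statements merged into one kernel-verified Lean document; each statement's English description precedes it below -/
import Mathlib

section
/- Let $\ket{\psi}\in\mathcal{H}_A\otimes\mathcal{H}_B$ be a unit vector, $\Pi_A$ the projection onto $\operatorname{Supp}_A\ket{\psi}$, and $A$ a self-adjoint operator on $\mathcal{H}_A$. If there exists an operator $\hat{A}$ on $\mathcal{H}_B$ with $\|(A\otimes\mathbb{1}_B)\ket{\psi}-(\mathbb{1}_A\otimes\hat{A})\ket{\psi}\|\le\varepsilon$, then $\|[\Pi_A,A]\otimes\mathbb{1}_B\ket{\psi}\|\le 2\varepsilon$. -/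
open Matrix Kronecker ComplexOrder
noncomputable section

def tensorVec {m n : Type*} (v : m → ℂ) (w : n → ℂ) : m × n → ℂ :=
  fun p => v p.1 * w p.2

def cinner {n : Type*} [Fintype n] (v w : n → ℂ) : ℂ := star v ⬝ᵥ w

def cnorm {n : Type*} [Fintype n] (v : n → ℂ) : ℝ := Real.sqrt (cinner v v).re

section Aux

variable {m n : Type*} [Fintype m] [Fintype n]

lemma cinner_self_re_nonneg (v : n → ℂ) : 0 ≤ (cinner v v).re := by
  simp only [cinner, dotProduct, Pi.star_apply, Complex.re_sum]
  apply Finset.sum_nonneg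
  intro i _
  rw [RCLike.star_def, mul_comm, Complex.mul_conj]
  simp [Complex.normSq_nonneg]

lemma cnorm_nonneg (v : n → ℂ) : 0 ≤ cnorm v := Real.sqrt_nonneg _

lemma cnorm_neg (v : n → ℂ) : cnorm (-v) = cnorm v := by
  simp [cnorm, cinner]

lemma cinner_mulVec_left (M : Matrix n n ℂ) (v w : n → ℂ) :
    cinner (M *ᵥ v) w = cinner v (Mᴴ *ᵥ w) := by
  simp [cinner, Matrix.star_mulVec, ← Matrix.dotProduct_mulVec]

lemma cnorm_proj_le (Q : Matrix n n ℂ) (hH : Qᴴ = Q) (hI : Q * Q = Q) (v : n → ℂ) :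
    cnorm (Q *ᵥ v) ≤ cnorm v := by
  set a := Q *ᵥ v with ha
  have c1 : cinner a a = cinner v a := by
    rw [ha, cinner_mulVec_left, hH, Matrix.mulVec_mulVec, hI]
  have c2 : cinner a v = cinner v a := by
    rw [ha, cinner_mulVec_left, hH]
  have hsub : cinner (v - a) (v - a) = cinner v v - cinner v a := by
    simp only [cinner, star_sub, sub_dotProduct, dotProduct_sub]
    have e1 : star a ⬝ᵥ a = star v ⬝ᵥ a := c1
    have e2 : star a ⬝ᵥ v = star v ⬝ᵥ a := c2
    rw [e1, e2]
    ring
  have key : (cinner a a).re + (cinner (v - a) (v - a)).re = (cinner v v).re := by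
    rw [hsub, c1]
    simp [Complex.sub_re]
  have h1 : (cinner a a).re ≤ (cinner v v).re := by
    have := cinner_self_re_nonneg (v - a)
    linarith
  exact Real.sqrt_le_sqrt h1

lemma kron_mulVec (M : Matrix m m ℂ) (N : Matrix n n ℂ) (v : m → ℂ) (w : n → ℂ) :
    (M ⊗ₖ N) *ᵥ tensorVec v w = tensorVec (M *ᵥ v) (N *ᵥ w) := by
  funext p
  simp only [Matrix.mulVec, dotProduct, tensorVec, Matrix.kroneckerMap_apply,
    Fintype.sum_prod_type]
  rw [Finset.sum_mul_sum]
  exact Finset.sum_congr rfl fun c _ => Finset.sum_congr rfl fun d _ => by ring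

lemma vecMulVec_mulVec' (a b v : n → ℂ) :
    Matrix.vecMulVec a b *ᵥ v = (b ⬝ᵥ v) • a := by
  funext k
  simp only [Matrix.mulVec, dotProduct, Matrix.vecMulVec_apply, Pi.smul_apply,
    smul_eq_mul, Finset.mul_sum]
  rw [Finset.sum_mul]
  exact Finset.sum_congr rfl fun i _ => by ring

lemma vecMulVec_mul_vecMulVec (a b c d : n → ℂ) :
    Matrix.vecMulVec a b * Matrix.vecMulVec c d = (b ⬝ᵥ c) • Matrix.vecMulVec a d := by
  funext i j
  simp only [Matrix.mul_apply, Matrix.vecMulVec_apply, Matrix.smul_apply, smul_eq_mul,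
    dotProduct, Finset.sum_mul]
  exact Finset.sum_congr rfl fun k _ => by ring

lemma sub_kron (M N : Matrix m m ℂ) (P : Matrix n n ℂ) :
    (M - N) ⊗ₖ P = M ⊗ₖ P - N ⊗ₖ P := by
  funext i j
  simp [Matrix.kroneckerMap_apply, sub_mul]

lemma sum_mulVec' {ι : Type*} (s : Finset ι) (M : ι → Matrix n n ℂ) (v : n → ℂ) :
    (∑ i ∈ s, M i) *ᵥ v = ∑ i ∈ s, M i *ᵥ v := by
  funext k
  simp only [Matrix.mulVec, dotProduct, Matrix.sum_apply, Finset.sum_mul, Finset.sum_apply]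
  rw [Finset.sum_comm]

lemma mulVec_sum' {ι : Type*} (s : Finset ι) (M : Matrix n n ℂ) (v : ι → n → ℂ) :
    M *ᵥ (∑ i ∈ s, v i) = ∑ i ∈ s, M *ᵥ v i :=
  map_sum M.mulVecLin v s

end Aux

/-- If `‖(A ⊗ 1)ψ - (1 ⊗ Â)ψ‖ ≤ ε` for some operator `Â` on `H_B`,
then `‖[Π_A, A] ⊗ 1 ψ‖ ≤ 2ε`, where `Π_A` projects onto `Supp_A ψ`. -/
theorem near_commutation_from_switched_operator
    {nA nB ι : Type*} [Fintype nA] [Fintype nB] [Fintype ι]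
    [DecidableEq nA] [DecidableEq nB] [DecidableEq ι]
    (lam : ι → ℝ) (hlam : ∀ i, 0 < lam i)
    (e : ι → nA → ℂ) (f : ι → nB → ℂ)
    (he : ∀ i j, cinner (e i) (e j) = if i = j then 1 else 0)
    (hf : ∀ i j, cinner (f i) (f j) = if i = j then 1 else 0)
    (ψ : nA × nB → ℂ)
    (hψ : ψ = ∑ i, ((lam i : ℝ) : ℂ) • tensorVec (e i) (f i))
    (hunit : cnorm ψ = 1)
    (A : Matrix nA nA ℂ) (hA : A.IsHermitian)
    (PiA : Matrix nA nA ℂ)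
    (hPi : PiA = ∑ i, vecMulVec (e i) (star (e i)))
    (ε : ℝ) (Ahat : Matrix nB nB ℂ)
    (hclose : cnorm ((A ⊗ₖ (1 : Matrix nB nB ℂ)) *ᵥ ψ
        - ((1 : Matrix nA nA ℂ) ⊗ₖ Ahat) *ᵥ ψ) ≤ ε) :
    cnorm (((PiA * A - A * PiA) ⊗ₖ (1 : Matrix nB nB ℂ)) *ᵥ ψ) ≤ 2 * ε := by
  -- Basic facts about PiA
  have hPie : ∀ j, PiA *ᵥ e j = e j := by
    intro j
    rw [hPi, sum_mulVec']
    simp only [vecMulVec_mulVec']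
    have : ∀ i, ((star (e i)) ⬝ᵥ e j) • e i = (if i = j then (1:ℂ) else 0) • e i := by
      intro i; rw [← he i j]; rfl
    rw [Finset.sum_congr rfl fun i _ => this i]
    simp
  have hPi2 : PiA * PiA = PiA := by
    rw [hPi, Finset.sum_mul_sum]
    have : ∀ i ∈ Finset.univ, ∀ j ∈ (Finset.univ : Finset ι),
        Matrix.vecMulVec (e i) (star (e i)) * Matrix.vecMulVec (e j) (star (e j))
          = (if i = j then (1:ℂ) else 0) • Matrix.vecMulVec (e i) (star (e j)) := by
      intro i _ j _
      rw [_root_.vecMulVec_mul_vecMulVec]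
      congr 1
      exact he i j
    rw [Finset.sum_congr rfl fun i hi => Finset.sum_congr rfl fun j hj => this i hi j hj]
    simp
  have hPiH : PiAᴴ = PiA := by
    rw [hPi, Matrix.conjTranspose_sum]
    apply Finset.sum_congr rfl
    intro i _
    funext a b
    simp [Matrix.conjTranspose_apply, Matrix.vecMulVec_apply, mul_comm]
  -- The big projection Pbig = PiA ⊗ 1
  set Pbig : Matrix (nA × nB) (nA × nB) ℂ := PiA ⊗ₖ (1 : Matrix nB nB ℂ) with hPbig
  have hPψ : Pbig *ᵥ ψ = ψ := by
    rw [hψ, hPbig, mulVec_sum']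
    apply Finset.sum_congr rfl
    intro i _
    rw [Matrix.mulVec_smul, kron_mulVec, hPie, Matrix.one_mulVec]
  have hPH : Pbigᴴ = Pbig := by
    rw [hPbig]
    funext p q
    simp only [Matrix.conjTranspose_apply, Matrix.kroneckerMap_apply, star_mul']
    rw [← Matrix.conjTranspose_apply PiA, ← Matrix.conjTranspose_apply (1 : Matrix nB nB ℂ),
      hPiH, Matrix.conjTranspose_one]
  have hP2 : Pbig * Pbig = Pbig := by
    rw [hPbig, ← Matrix.mul_kronecker_mul, hPi2, Matrix.one_mul]
  -- vectors
  set x : nA × nB → ℂ := (A ⊗ₖ (1 : Matrix nB nB ℂ)) *ᵥ ψ with hx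
  set y : nA × nB → ℂ := ((1 : Matrix nA nA ℂ) ⊗ₖ Ahat) *ᵥ ψ with hy
  have hcomm : Pbig * ((1 : Matrix nA nA ℂ) ⊗ₖ Ahat)
      = ((1 : Matrix nA nA ℂ) ⊗ₖ Ahat) * Pbig := by
    rw [hPbig, ← Matrix.mul_kronecker_mul, ← Matrix.mul_kronecker_mul]
    simp
  have hPy : Pbig *ᵥ y = y := by
    rw [hy, Matrix.mulVec_mulVec, hcomm, ← Matrix.mulVec_mulVec, hPψ]
  set d : nA × nB → ℂ := x - y with hd
  -- rewrite target
  have htarget : ((PiA * A - A * PiA) ⊗ₖ (1 : Matrix nB nB ℂ)) *ᵥ ψ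
      = -((1 - Pbig) *ᵥ d) := by
    rw [sub_kron, Matrix.sub_mulVec]
    have h1 : ((PiA * A) ⊗ₖ (1 : Matrix nB nB ℂ)) *ᵥ ψ = Pbig *ᵥ x := by
      rw [hx, Matrix.mulVec_mulVec, hPbig, ← Matrix.mul_kronecker_mul, Matrix.one_mul]
    have h2 : ((A * PiA) ⊗ₖ (1 : Matrix nB nB ℂ)) *ᵥ ψ = x := by
      have hmm : (A * PiA) ⊗ₖ ((1 : Matrix nB nB ℂ) * 1)
          = (A ⊗ₖ (1 : Matrix nB nB ℂ)) * Pbig := by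
        rw [Matrix.mul_kronecker_mul, hPbig]
      rw [Matrix.mul_one] at hmm
      rw [hmm, ← Matrix.mulVec_mulVec, hPψ, hx]
    rw [h1, h2, Matrix.sub_mulVec, Matrix.one_mulVec, hd, Matrix.mulVec_sub, hPy]
    abel
  rw [htarget, cnorm_neg]
  -- 1 - Pbig is an orthogonal projection
  have hQH : (1 - Pbig)ᴴ = 1 - Pbig := by
    rw [Matrix.conjTranspose_sub, Matrix.conjTranspose_one, hPH]
  have hQ2 : (1 - Pbig) * (1 - Pbig) = 1 - Pbig := by
    rw [Matrix.sub_mul, Matrix.mul_sub, Matrix.mul_sub, hP2, Matrix.one_mul,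
      Matrix.mul_one, Matrix.one_mul]
    abel
  have hεnn : 0 ≤ ε := le_trans (cnorm_nonneg _) hclose
  calc cnorm ((1 - Pbig) *ᵥ d) ≤ cnorm d := cnorm_proj_le _ hQH hQ2 d
    _ ≤ ε := hclose
    _ ≤ 2 * ε := by linarith
end
end

section
/- Let $S=(\ket{\psi},\{A_{sa}\},\{B_{tb}\})$ be a pure strategy with restriction $S_{\mathrm{res}}=(\ket{\psi'},\{A'_{sa}\},\{B'_{tb}\})$ (restricting via the Schmidt isometries $U_A,U_B$ with $U_AU_A^*=\Pi_A$, $U_BU_B^*=\Pi_B$). Then for each $s,a$: $\langle \mathbb{1}-A'_{sa}, A'_{sa}\rangle_{\sigma'_A} - \|[\Pi_A,A_{sa}]\|_{\sigma_A}^2 = \langle \mathbb{1}-A_{sa},A_{sa}\rangle_{\sigma_A}$, where $\langle X,Y\rangle_{\sigma}:=\operatorname{Tr}[X^*Y\sigma]$, $\|X\|_\sigma := \sqrt{\operatorname{Tr}[X^*X\sigma]}$, $\sigma_A = \operatorname{Tr}_B\proj{\psi}$, and $\sigma'_A = \operatorname{Tr}_B\proj{\psi'}$. In particular, if $\langle\mathbb{1}-A'_{sa},A'_{sa}\rangle_{\sigma'_A}\le\varepsilon^2$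 then both $\langle\mathbb{1}-A_{sa},A_{sa}\rangle_{\sigma_A}\le\varepsilon^2$ and $\|[\Pi_A,A_{sa}]\|^2_{\sigma_A}\le\varepsilon^2$. -/
open Matrix Kronecker ComplexOrder
noncomputable section

/-- Partial trace over the second tensor factor. -/
def ptrB {a b : Type*} [Fintype b] (ρ : Matrix (a × b) (a × b) ℂ) : Matrix a a ℂ :=
  Matrix.of fun i j => ∑ k, ρ (i, k) (j, k)

open scoped MatrixOrder in
def Matrix.PosSemidef.sqrt {n : Type*} [Fintype n] [DecidableEq n] {M : Matrix n n ℂ}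
    (_h : M.PosSemidef) : Matrix n n ℂ := CFC.sqrt M

open scoped MatrixOrder in
theorem Matrix.PosSemidef.sqrt_mul_self {n : Type*} [Fintype n] [DecidableEq n]
    {M : Matrix n n ℂ} (h : M.PosSemidef) : h.sqrt * h.sqrt = M :=
  CFC.sqrt_mul_sqrt_self M h.nonneg

open scoped MatrixOrder in
theorem Matrix.PosSemidef.posSemidef_sqrt {n : Type*} [Fintype n] [DecidableEq n]
    {M : Matrix n n ℂ} (h : M.PosSemidef) : h.sqrt.PosSemidef :=
  (CFC.sqrt_nonneg M).posSemidef

/-- trace of a PSD matrix has nonnegative real part -/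
lemma psd_trace_re_nonneg {n : Type*} [Fintype n] [DecidableEq n] {M : Matrix n n ℂ}
    (h : M.PosSemidef) : 0 ≤ M.trace.re := by
  have hd : ∀ i, 0 ≤ (M i i).re := by
    intro i
    have := h.re_dotProduct_nonneg (Pi.single i 1)
    simpa [dotProduct, Matrix.mulVec, Pi.single_apply, Finset.sum_ite_eq] using this
  simp only [Matrix.trace, Matrix.diag, Complex.re_sum]
  exact Finset.sum_nonneg fun i _ => hd i

/-- trace of a product of PSD matrices has nonnegative real part -/
lemma psd_mul_trace_re_nonneg {n : Type*} [Fintype n] [DecidableEq n] {P Q : Matrix n n ℂ}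
    (hP : P.PosSemidef) (hQ : Q.PosSemidef) : 0 ≤ ((P * Q).trace).re := by
  have hs := hP.sqrt_mul_self
  have hH : hP.sqrtᴴ = hP.sqrt := hP.posSemidef_sqrt.1
  have psd : (hP.sqrt * Q * hP.sqrt).PosSemidef := by
    have := hQ.mul_mul_conjTranspose_same hP.sqrt
    rwa [hH] at this
  have key : (P * Q).trace = (hP.sqrt * Q * hP.sqrt).trace := by
    conv_lhs => rw [← hs]
    rw [Matrix.mul_assoc, Matrix.trace_mul_comm]
  rw [key]
  exact psd_trace_re_nonneg psd

/-- For the restriction of a pure strategy,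
`⟨1 - A', A'⟩_{σ'_A} - ‖[Π_A, A]‖²_{σ_A} = ⟨1 - A, A⟩_{σ_A}`; in particular,
if `⟨1 - A', A'⟩_{σ'_A} ≤ ε²` then both terms on the right are `≤ ε²`. -/
theorem restriction_projectiveness_decomposition
    {nA nB S A : Type*} [Fintype nA] [Fintype nB] [Fintype S] [Fintype A]
    [DecidableEq nA] [DecidableEq nB] (d : ℕ)
    (lam : Fin d → ℝ) (hlam : ∀ i, 0 < lam i)
    (e : Fin d → nA → ℂ) (f : Fin d → nB → ℂ)
    (he : ∀ i j, cinner (e i) (e j) = if i = j then 1 else 0)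
    (hf : ∀ i j, cinner (f i) (f j) = if i = j then 1 else 0)
    (ψ : nA × nB → ℂ)
    (hψ : ψ = ∑ i, ((lam i : ℝ) : ℂ) • tensorVec (e i) (f i))
    (hunit : cnorm ψ = 1)
    (Am : S → A → Matrix nA nA ℂ) (hA : ∀ s a, (Am s a).PosSemidef)
    (hAsum : ∀ s, ∑ a, Am s a = 1)
    (UA : Matrix nA (Fin d) ℂ) (hUA : UA = Matrix.of fun a i => e i a)
    (UB : Matrix nB (Fin d) ℂ) (hUB : UB = Matrix.of fun b i => f i b)
    (PiA : Matrix nA nA ℂ) (hPi : PiA = UA * UAᴴ)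
    (ψ' : Fin d × Fin d → ℂ) (hψ' : ψ' = (UAᴴ ⊗ₖ UBᴴ) *ᵥ ψ)
    (σA : Matrix nA nA ℂ) (hσA : σA = ptrB (vecMulVec ψ (star ψ)))
    (σA' : Matrix (Fin d) (Fin d) ℂ) (hσA' : σA' = ptrB (vecMulVec ψ' (star ψ')))
    (ε : ℝ) :
    ∀ s a,
      (((1 - (UAᴴ * Am s a * UA))ᴴ * (UAᴴ * Am s a * UA) * σA').trace
          - ((PiA * Am s a - Am s a * PiA)ᴴ * (PiA * Am s a - Am s a * PiA) * σA).trace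
        = ((1 - Am s a)ᴴ * Am s a * σA).trace) ∧
      ((((1 - (UAᴴ * Am s a * UA))ᴴ * (UAᴴ * Am s a * UA) * σA').trace.re ≤ ε ^ 2 →
          ((1 - Am s a)ᴴ * Am s a * σA).trace.re ≤ ε ^ 2 ∧
          ((PiA * Am s a - Am s a * PiA)ᴴ * (PiA * Am s a - Am s a * PiA) * σA).trace.re
            ≤ ε ^ 2)) := by
  classical
  -- orthonormality in summation form
  have heS : ∀ i k, (∑ x, (starRingEnd ℂ) (e i x) * e k x) = if i = k then 1 else 0 := by
    intro i k
    simpa [cinner, dotProduct] using he i k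
  have hfS : ∀ i k, (∑ x, (starRingEnd ℂ) (f i x) * f k x) = if i = k then 1 else 0 := by
    intro i k
    simpa [cinner, dotProduct] using hf i k
  have hU : UAᴴ * UA = (1 : Matrix (Fin d) (Fin d) ℂ) := by
    ext i j
    simp only [Matrix.mul_apply, Matrix.conjTranspose_apply, hUA, Matrix.of_apply,
      Matrix.one_apply, Complex.star_def]
    exact heS i j
  -- pointwise formula for ψ
  have hψp : ∀ p : nA × nB, ψ p = ∑ k, ((lam k : ℝ) : ℂ) * (e k p.1 * f k p.2) := by
    intro p
    rw [hψ]
    simp [tensorVec]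
  have hψc : ∀ p : nA × nB, (starRingEnd ℂ) (ψ p)
      = ∑ k, ((lam k : ℝ) : ℂ) * ((starRingEnd ℂ) (e k p.1) * (starRingEnd ℂ) (f k p.2)) := by
    intro p
    rw [hψp, map_sum]
    refine Finset.sum_congr rfl fun k _ => ?_
    rw [_root_.map_mul, _root_.map_mul, Complex.conj_ofReal]
  -- ψ' is "diagonal"
  have hψd : ∀ i j : Fin d, ψ' (i, j) = if i = j then ((lam i : ℝ) : ℂ) else 0 := by
    intro i j
    rw [hψ']
    simp only [Matrix.mulVec, dotProduct, Matrix.kroneckerMap_apply,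
      Matrix.conjTranspose_apply, Fintype.sum_prod_type, Complex.star_def, hUA, hUB,
      Matrix.of_apply]
    calc (∑ a : nA, ∑ b : nB, (starRingEnd ℂ) (e i a) * (starRingEnd ℂ) (f j b) * ψ (a, b))
        = ∑ a : nA, ∑ b : nB, ∑ k, (starRingEnd ℂ) (e i a) * (starRingEnd ℂ) (f j b) *
            (((lam k : ℝ) : ℂ) * (e k a * f k b)) := by
          refine Finset.sum_congr rfl fun a _ => Finset.sum_congr rfl fun b _ => ?_
          rw [hψp, Finset.mul_sum]
      _ = ∑ k, ∑ a : nA, ∑ b : nB, (starRingEnd ℂ) (e i a) * (starRingEnd ℂ) (f j b) *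
            (((lam k : ℝ) : ℂ) * (e k a * f k b)) := by
          rw [show (∑ a : nA, ∑ b : nB, ∑ k, (starRingEnd ℂ) (e i a) * (starRingEnd ℂ) (f j b) *
            (((lam k : ℝ) : ℂ) * (e k a * f k b))) = ∑ a : nA, ∑ k, ∑ b : nB,
            (starRingEnd ℂ) (e i a) * (starRingEnd ℂ) (f j b) *
            (((lam k : ℝ) : ℂ) * (e k a * f k b)) from
            Finset.sum_congr rfl fun a _ => Finset.sum_comm]
          exact Finset.sum_comm
      _ = ∑ k, ((lam k : ℝ) : ℂ) * ((∑ a, (starRingEnd ℂ) (e i a) * e k a) *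
            (∑ b, (starRingEnd ℂ) (f j b) * f k b)) := by
          refine Finset.sum_congr rfl fun k _ => ?_
          rw [Finset.sum_mul_sum, Finset.mul_sum]
          refine Finset.sum_congr rfl fun a _ => ?_
          rw [Finset.mul_sum]
          exact Finset.sum_congr rfl fun b _ => by ring
      _ = if i = j then ((lam i : ℝ) : ℂ) else 0 := by
          simp only [heS, hfS]
          by_cases h : i = j
          · subst h
            rw [if_pos rfl, Finset.sum_eq_single i]
            · simp
            · intro k _ hk
              simp [Ne.symm hk]
            · simp
          · rw [if_neg h]
            apply Finset.sum_eq_zero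
            intro k _
            by_cases h1 : i = k
            · subst h1
              have : ¬ j = i := fun hh => h hh.symm
              simp [this]
            · simp [h1]
  -- σA' is the diagonal matrix of squared Schmidt coefficients
  have hσA'd : σA' = Matrix.diagonal (fun i => (((lam i : ℝ) : ℂ)) ^ 2) := by
    ext i j
    rw [hσA']
    simp only [ptrB, Matrix.of_apply, Matrix.vecMulVec_apply, Pi.star_apply]
    rw [show (∑ k, ψ' (i, k) * star (ψ' (j, k))) =
        ∑ k, (if i = k then ((lam i : ℝ) : ℂ) else 0) *
          star (if j = k then ((lam j : ℝ) : ℂ) else 0) from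
      Finset.sum_congr rfl fun k _ => by rw [hψd, hψd]]
    by_cases h : i = j
    · subst h
      rw [Matrix.diagonal_apply_eq, Finset.sum_eq_single i]
      · simp [Complex.star_def, Complex.conj_ofReal, sq]
      · intro k _ hk
        simp [Ne.symm hk]
      · simp
    · rw [Matrix.diagonal_apply_ne _ h]
      apply Finset.sum_eq_zero
      intro k _
      by_cases h1 : i = k
      · subst h1
        have : ¬ j = i := fun hh => h hh.symm
        simp [this]
      · simp [h1]
  -- σA = UA σA' UAᴴ
  have hσd : σA = UA * σA' * UAᴴ := by
    rw [hσA'd]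
    ext x y
    rw [hσA]
    simp only [ptrB, Matrix.of_apply, Matrix.vecMulVec_apply, Pi.star_apply, Complex.star_def]
    have hRHS : (UA * Matrix.diagonal (fun i => (((lam i : ℝ) : ℂ)) ^ 2) * UAᴴ) x y
        = ∑ i, (((lam i : ℝ) : ℂ) * ((lam i : ℝ) : ℂ)) *
            (e i x * (starRingEnd ℂ) (e i y)) := by
      rw [Matrix.mul_assoc, hUA]
      simp only [Matrix.mul_apply, Matrix.conjTranspose_apply, Matrix.of_apply,
        Complex.star_def, Matrix.diagonal_apply, ite_mul, zero_mul, Finset.sum_ite_eq,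
        Finset.mem_univ, if_true]
      refine Finset.sum_congr rfl fun i _ => ?_
      ring
    rw [hRHS]
    calc (∑ b : nB, ψ (x, b) * (starRingEnd ℂ) (ψ (y, b)))
        = ∑ b : nB, ∑ i, ∑ j, (((lam i : ℝ) : ℂ) * (e i x * f i b)) *
            (((lam j : ℝ) : ℂ) * ((starRingEnd ℂ) (e j y) * (starRingEnd ℂ) (f j b))) := by
          refine Finset.sum_congr rfl fun b _ => ?_
          rw [hψp, hψc, Finset.sum_mul_sum]
      _ = ∑ i, ∑ j, ∑ b : nB, (((lam i : ℝ) : ℂ) * (e i x * f i b)) *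
            (((lam j : ℝ) : ℂ) * ((starRingEnd ℂ) (e j y) * (starRingEnd ℂ) (f j b))) := by
          rw [show (∑ b : nB, ∑ i, ∑ j, (((lam i : ℝ) : ℂ) * (e i x * f i b)) *
            (((lam j : ℝ) : ℂ) * ((starRingEnd ℂ) (e j y) * (starRingEnd ℂ) (f j b))))
            = ∑ i, ∑ b : nB, ∑ j, (((lam i : ℝ) : ℂ) * (e i x * f i b)) *
            (((lam j : ℝ) : ℂ) * ((starRingEnd ℂ) (e j y) * (starRingEnd ℂ) (f j b))) from
            Finset.sum_comm]
          exact Finset.sum_congr rfl fun i _ => Finset.sum_comm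
      _ = ∑ i, ∑ j, (((lam i : ℝ) : ℂ) * ((lam j : ℝ) : ℂ)) *
            (e i x * (starRingEnd ℂ) (e j y)) * (∑ b, (starRingEnd ℂ) (f j b) * f i b) := by
          refine Finset.sum_congr rfl fun i _ => Finset.sum_congr rfl fun j _ => ?_
          rw [Finset.mul_sum]
          exact Finset.sum_congr rfl fun b _ => by ring
      _ = ∑ i, (((lam i : ℝ) : ℂ) * ((lam i : ℝ) : ℂ)) *
            (e i x * (starRingEnd ℂ) (e i y)) := by
          simp only [hfS]
          refine Finset.sum_congr rfl fun i _ => ?_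
          rw [Finset.sum_eq_single i]
          · simp
          · intro j _ hj
            have : ¬ j = i := hj
            simp [this]
          · simp
  intro s a
  set M := Am s a with hM
  have hMH : Mᴴ = M := (hA s a).1
  have hPH : PiAᴴ = PiA := by rw [hPi]; simp [Matrix.conjTranspose_mul]
  have hPP : PiA * PiA = PiA := by
    rw [hPi]
    calc UA * UAᴴ * (UA * UAᴴ) = UA * (UAᴴ * UA) * UAᴴ := by simp only [Matrix.mul_assoc]
      _ = UA * UAᴴ := by rw [hU, Matrix.mul_one]
  have hPs : PiA * σA = σA := by
    rw [hPi, hσd]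
    calc UA * UAᴴ * (UA * σA' * UAᴴ) = UA * (UAᴴ * UA) * (σA' * UAᴴ) := by simp only [Matrix.mul_assoc]
      _ = UA * σA' * UAᴴ := by rw [hU]; simp [Matrix.mul_assoc]
  have hsP : σA * PiA = σA := by
    rw [hPi, hσd]
    calc UA * σA' * UAᴴ * (UA * UAᴴ) = UA * σA' * (UAᴴ * UA) * UAᴴ := by simp only [Matrix.mul_assoc]
      _ = UA * σA' * UAᴴ := by rw [hU]; simp [Matrix.mul_assoc]
  have hUσU : UA * σA' * UAᴴ = σA := hσd.symm
  -- trace identities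
  have t1eq : ((UAᴴ * M * UA) * σA').trace = (M * σA).trace := by
    rw [show (UAᴴ * M * UA) * σA' = UAᴴ * (M * (UA * σA')) from by simp only [Matrix.mul_assoc],
      Matrix.trace_mul_comm]
    rw [show M * (UA * σA') * UAᴴ = M * (UA * σA' * UAᴴ) from by simp only [Matrix.mul_assoc], hUσU]
  have t3eq : ((UAᴴ * M * UA) * (UAᴴ * M * UA) * σA').trace = (M * PiA * M * σA).trace := by
    rw [show (UAᴴ * M * UA) * (UAᴴ * M * UA) * σA'
        = UAᴴ * (M * (UA * UAᴴ) * M * (UA * σA')) from by simp only [Matrix.mul_assoc],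
      Matrix.trace_mul_comm]
    rw [show M * (UA * UAᴴ) * M * (UA * σA') * UAᴴ
        = M * (UA * UAᴴ) * M * (UA * σA' * UAᴴ) from by simp only [Matrix.mul_assoc], hUσU, ← hPi]
  have eq1 : ((1 - (UAᴴ * M * UA))ᴴ * (UAᴴ * M * UA) * σA').trace
      = (M * σA).trace - (M * PiA * M * σA).trace := by
    have hM'H : (UAᴴ * M * UA)ᴴ = UAᴴ * M * UA := by
      simp [Matrix.conjTranspose_mul, hMH, Matrix.mul_assoc]
    rw [Matrix.conjTranspose_sub, Matrix.conjTranspose_one, hM'H, Matrix.sub_mul,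
      Matrix.sub_mul, Matrix.one_mul, Matrix.trace_sub, t1eq, t3eq]
  have eq2 : ((PiA * M - M * PiA)ᴴ * (PiA * M - M * PiA) * σA).trace
      = (M * M * σA).trace - (M * PiA * M * σA).trace := by
    have hCH : (PiA * M - M * PiA)ᴴ = M * PiA - PiA * M := by
      simp [Matrix.conjTranspose_sub, Matrix.conjTranspose_mul, hMH, hPH]
    rw [hCH]
    have expand : (M * PiA - PiA * M) * (PiA * M - M * PiA) * σA
        = M * (PiA * PiA) * M * σA - M * PiA * M * (PiA * σA)
          - PiA * (M * PiA * M * σA) + PiA * (M * M * (PiA * σA)) := by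
      noncomm_ring
    rw [expand, hPs, hPP]
    rw [Matrix.trace_add, Matrix.trace_sub, Matrix.trace_sub,
      Matrix.trace_mul_comm PiA (M * PiA * M * σA),
      Matrix.trace_mul_comm PiA (M * M * σA)]
    rw [show M * PiA * M * σA * PiA = M * PiA * M * (σA * PiA) from by simp only [Matrix.mul_assoc], hsP]
    rw [show M * M * σA * PiA = M * M * (σA * PiA) from by simp only [Matrix.mul_assoc], hsP]
    ring
  have eq3 : ((1 - M)ᴴ * M * σA).trace = (M * σA).trace - (M * M * σA).trace := by
    rw [Matrix.conjTranspose_sub, Matrix.conjTranspose_one, hMH, Matrix.sub_mul,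
      Matrix.sub_mul, Matrix.one_mul, Matrix.trace_sub]
  have main : ((1 - (UAᴴ * M * UA))ᴴ * (UAᴴ * M * UA) * σA').trace
      - ((PiA * M - M * PiA)ᴴ * (PiA * M - M * PiA) * σA).trace
      = ((1 - M)ᴴ * M * σA).trace := by
    rw [eq1, eq2, eq3]; ring
  refine ⟨main, fun hle => ?_⟩
  -- positivity facts
  have hσpsd : σA.PosSemidef := by
    rw [hσd, hσA'd]
    exact (Matrix.PosSemidef.diagonal fun i => by
      rw [show (((lam i : ℝ) : ℂ)) ^ 2 = ((lam i ^ 2 : ℝ) : ℂ) from by push_cast; ring]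
      exact Complex.zero_le_real.2 (sq_nonneg _)).mul_mul_conjTranspose_same UA
  have hCpsd : 0 ≤ ((PiA * M - M * PiA)ᴴ * (PiA * M - M * PiA) * σA).trace.re := by
    rw [show (PiA * M - M * PiA)ᴴ * (PiA * M - M * PiA) * σA
      = ((PiA * M - M * PiA)ᴴ * (PiA * M - M * PiA)) * σA from by rw [Matrix.mul_assoc]]
    exact psd_mul_trace_re_nonneg (Matrix.posSemidef_conjTranspose_mul_self _) hσpsd
  have h1M : (1 - M).PosSemidef := by
    have hsum : M + ∑ a' ∈ Finset.univ.erase a, Am s a' = 1 := by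
      rw [← hAsum s]
      exact Finset.add_sum_erase _ _ (Finset.mem_univ a)
    have h1 : (1 : Matrix nA nA ℂ) - M = ∑ a' ∈ Finset.univ.erase a, Am s a' := by
      rw [← hsum]; abel
    rw [h1]
    exact Finset.sum_induction _ _ (fun x y hx hy => hx.add hy) Matrix.PosSemidef.zero
      fun a' _ => hA s a'
  have hprodpsd : ((1 - M) * M).PosSemidef := by
    have hRR : (hA s a).sqrt * (hA s a).sqrt = M := (hA s a).sqrt_mul_self
    have hRH : (hA s a).sqrtᴴ = (hA s a).sqrt := (hA s a).posSemidef_sqrt.1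
    have key : (hA s a).sqrtᴴ * (1 - M) * (hA s a).sqrt = (1 - M) * M := by
      rw [hRH]
      conv_lhs => rw [show (1 : Matrix nA nA ℂ) - M = 1 - (hA s a).sqrt * (hA s a).sqrt from
        by rw [hRR]]
      conv_rhs => rw [show ((1 : Matrix nA nA ℂ) - M) * M
        = (1 - (hA s a).sqrt * (hA s a).sqrt) * ((hA s a).sqrt * (hA s a).sqrt) from
        by rw [hRR]]
      noncomm_ring
    rw [← key]
    exact h1M.conjTranspose_mul_mul_same _
  have hRHSpos : 0 ≤ ((1 - M)ᴴ * M * σA).trace.re := by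
    rw [Matrix.conjTranspose_sub, Matrix.conjTranspose_one, hMH]
    exact psd_mul_trace_re_nonneg hprodpsd hσpsd
  have hx : ((1 - (UAᴴ * M * UA))ᴴ * (UAᴴ * M * UA) * σA').trace.re
      = ((1 - M)ᴴ * M * σA).trace.re
        + ((PiA * M - M * PiA)ᴴ * (PiA * M - M * PiA) * σA).trace.re := by
    have h2 : ((1 - (UAᴴ * M * UA))ᴴ * (UAᴴ * M * UA) * σA').trace
        = ((1 - M)ᴴ * M * σA).trace
          + ((PiA * M - M * PiA)ᴴ * (PiA * M - M * PiA) * σA).trace := by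
      linear_combination main
    rw [h2, Complex.add_re]
  constructor
  · rw [hx] at hle; linarith
  · rw [hx] at hle; linarith
end
end

section
/- Let $S=(\ket{\psi},\{A_{sa}\},\{B_{tb}\})$ be a pure strategy, $\Pi$ the projection onto $\operatorname{Supp}_A\ket{\psi}$, $\sigma = \operatorname{Tr}_B\proj{\psi}$, and let $(\{P_{sa}\},V)$ be a Naimark dilation of $\{A_{sa}\}$ (so $V$ is an isometry with $V^*P_{sa}V=A_{sa}$ and $P_{sa}$ projections). Then $\|[V\Pi V^*, P_{sa}]\|^2_{V\sigma V^*} - \langle\mathbb{1}-A_{sa},A_{sa}\rangle_\sigma = \|[\Pi,A_{sa}]\|^2_\sigma$, where $\|X\|^2_\tau:=\operatorname{Tr}[X^*X\tau]$ and $\langle X,Y\rangle_\tau:=\operatorname{Tr}[X^*Y\tau]$. -/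
open Matrix Kronecker ComplexOrder
noncomputable section

lemma vmv_mul {n : Type*} [Fintype n] (v w x y : n → ℂ) :
    vecMulVec v w * vecMulVec x y = (w ⬝ᵥ x) • vecMulVec v y := by
  ext i j
  simp [Matrix.mul_apply, vecMulVec_apply, dotProduct, Finset.sum_mul, Finset.mul_sum]
  exact Finset.sum_congr rfl fun k _ => by ring

lemma vmv_herm {n : Type*} [Fintype n] (v : n → ℂ) :
    (vecMulVec v (star v))ᴴ = vecMulVec v (star v) := by
  ext i j
  simp [conjTranspose_apply, vecMulVec_apply, mul_comm]

lemma sigma_eq {nA nB ι : Type*} [Fintype nA] [Fintype nB] [Fintype ι] [DecidableEq ι]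
    (lam : ι → ℝ) (e : ι → nA → ℂ) (f : ι → nB → ℂ)
    (hf : ∀ i j, cinner (f i) (f j) = if i = j then 1 else 0)
    (ψ : nA × nB → ℂ)
    (hψ : ψ = ∑ i, ((lam i : ℝ) : ℂ) • tensorVec (e i) (f i)) :
    ptrB (vecMulVec ψ (star ψ))
      = ∑ m, ((((lam m : ℝ) : ℂ))^2) • vecMulVec (e m) (star (e m)) := by
  have hfs : ∀ m n, (∑ k, f m k * star (f n k)) = if n = m then 1 else 0 := by
    intro m n
    have h := hf n m
    simp only [cinner, dotProduct, Pi.star_apply] at h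
    rw [← h]
    exact Finset.sum_congr rfl fun k _ => by simp [mul_comm]
  ext i j
  simp only [ptrB, of_apply, vecMulVec_apply, Pi.star_apply, hψ, Finset.sum_apply,
    Pi.smul_apply, tensorVec, smul_eq_mul, star_sum, star_mul', Matrix.sum_apply,
    Matrix.smul_apply]
  simp only [Finset.sum_mul, Finset.mul_sum]
  rw [Finset.sum_comm]
  refine Finset.sum_congr rfl fun n _ => ?_
  calc ∑ k : nB, ∑ m : ι, (lam m : ℂ) * (e m i * f m k) *
        (star (lam n : ℂ) * (star (e n j) * star (f n k)))
      = ∑ m : ι, ((lam m : ℂ) * e m i * (star (lam n : ℂ) * star (e n j)))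
          * ∑ k, f m k * star (f n k) := by
        rw [Finset.sum_comm]
        refine Finset.sum_congr rfl fun m _ => ?_
        rw [Finset.mul_sum]
        exact Finset.sum_congr rfl fun k _ => by ring
    _ = (lam n : ℂ) ^ 2 * (e n i * star (e n j)) := by
        simp only [hfs, mul_ite, mul_one, mul_zero, Finset.sum_ite_eq, Finset.mem_univ,
          if_true]
        simp only [Complex.star_def, Complex.conj_ofReal]
        ring

/-- For a Naimark dilation `(P, V)` of Alice's POVMs and `Π` the
projection onto `Supp_A ψ`,
`‖[VΠV*, P_{sa}]‖²_{VσV*} - ⟨1 - A_{sa}, A_{sa}⟩_σ = ‖[Π, A_{sa}]‖²_σ`. -/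
theorem naimark_support_preserving_decomposition
    {nA nA' nB S A : Type*} [Fintype nA] [Fintype nA'] [Fintype nB]
    [Fintype S] [Fintype A] [DecidableEq nA] [DecidableEq nA'] [DecidableEq nB]
    {ι : Type*} [Fintype ι] [DecidableEq ι]
    (lam : ι → ℝ) (hlam : ∀ i, 0 < lam i)
    (e : ι → nA → ℂ) (f : ι → nB → ℂ)
    (he : ∀ i j, cinner (e i) (e j) = if i = j then 1 else 0)
    (hf : ∀ i j, cinner (f i) (f j) = if i = j then 1 else 0)
    (ψ : nA × nB → ℂ)
    (hψ : ψ = ∑ i, ((lam i : ℝ) : ℂ) • tensorVec (e i) (f i))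
    (hunit : cnorm ψ = 1)
    (Am : S → A → Matrix nA nA ℂ) (hA : ∀ s a, (Am s a).PosSemidef)
    (hAsum : ∀ s, ∑ a, Am s a = 1)
    (Pi : Matrix nA nA ℂ) (hPi : Pi = ∑ i, vecMulVec (e i) (star (e i)))
    (σ : Matrix nA nA ℂ) (hσ : σ = ptrB (vecMulVec ψ (star ψ)))
    (P : S → A → Matrix nA' nA' ℂ)
    (hPproj : ∀ s a, (P s a).IsHermitian ∧ P s a * P s a = P s a)
    (hPsum : ∀ s, ∑ a, P s a = 1)
    (V : Matrix nA' nA ℂ) (hViso : Vᴴ * V = 1)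
    (hdil : ∀ s a, Vᴴ * P s a * V = Am s a) :
    ∀ s a,
      ((V * Pi * Vᴴ * P s a - P s a * (V * Pi * Vᴴ))ᴴ
          * (V * Pi * Vᴴ * P s a - P s a * (V * Pi * Vᴴ)) * (V * σ * Vᴴ)).trace
        - ((1 - Am s a)ᴴ * Am s a * σ).trace
      = ((Pi * Am s a - Am s a * Pi)ᴴ * (Pi * Am s a - Am s a * Pi) * σ).trace := by
  intro s a
  set A0 := Am s a with hA0
  set P0 := P s a with hP0
  have hAH : A0ᴴ = A0 := (hA s a).1
  have hPH : P0ᴴ = P0 := (hPproj s a).1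
  have hPP : P0 * P0 = P0 := (hPproj s a).2
  have hPiH : Piᴴ = Pi := by
    rw [hPi, conjTranspose_sum]
    exact Finset.sum_congr rfl fun i _ => vmv_herm (e i)
  have heds : ∀ i j, star (e i) ⬝ᵥ e j = if i = j then (1:ℂ) else 0 := he
  have hPiPi : Pi * Pi = Pi := by
    rw [hPi, Finset.sum_mul]
    refine Finset.sum_congr rfl fun i _ => ?_
    rw [Finset.mul_sum]
    simp [vmv_mul, heds, ite_smul, Finset.sum_ite_eq, apply_ite]
  have hσ' : σ = ∑ m, ((((lam m : ℝ) : ℂ))^2) • vecMulVec (e m) (star (e m)) :=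
    hσ.trans (sigma_eq lam e f hf ψ hψ)
  have hPis : Pi * σ = σ := by
    rw [hPi, hσ', Finset.sum_mul]
    simp only [Finset.mul_sum, Matrix.mul_smul, vmv_mul, heds, ite_smul, one_smul,
      zero_smul, smul_ite, smul_zero, Finset.sum_ite_eq, Finset.mem_univ, if_true]
  have hsPi : σ * Pi = σ := by
    rw [hσ', hPi, Finset.sum_mul]
    simp only [Finset.mul_sum, smul_mul_assoc, vmv_mul, heds, ite_smul, one_smul,
      zero_smul, smul_ite, smul_zero, Finset.sum_ite_eq, Finset.mem_univ, if_true]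
  -- elimination lemmas
  have hVVx : ∀ (X : Matrix nA nA ℂ), Vᴴ * (V * X) = X := by
    intro X; rw [← Matrix.mul_assoc, hViso, Matrix.one_mul]
  have hVPV : Vᴴ * (P0 * V) = A0 := by rw [← Matrix.mul_assoc]; exact hdil s a
  have hVPVx : ∀ (X : Matrix nA nA ℂ), Vᴴ * (P0 * (V * X)) = A0 * X := by
    intro X
    calc Vᴴ * (P0 * (V * X)) = (Vᴴ * P0 * V) * X := by
          simp only [Matrix.mul_assoc]
      _ = A0 * X := by rw [hdil s a]
  have hPiPix : ∀ (X : Matrix nA nA ℂ), Pi * (Pi * X) = Pi * X := by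
    intro X; rw [← Matrix.mul_assoc, hPiPi]
  have hPPx : ∀ (X : Matrix nA' nA ℂ), P0 * (P0 * X) = P0 * X := by
    intro X; rw [← Matrix.mul_assoc, hPP]
  have tr_conj : ∀ (M : Matrix nA' nA' ℂ),
      (M * (V * σ * Vᴴ)).trace = ((Vᴴ * (M * V)) * σ).trace := by
    intro M
    rw [show M * (V * σ * Vᴴ) = (M * V * σ) * Vᴴ by simp only [Matrix.mul_assoc],
      trace_mul_comm, ← Matrix.mul_assoc, ← Matrix.mul_assoc]
  have lhs_eq : Vᴴ * (((V * Pi * Vᴴ * P0 - P0 * (V * Pi * Vᴴ))ᴴ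
      * (V * Pi * Vᴴ * P0 - P0 * (V * Pi * Vᴴ))) * V)
      = A0 * (Pi * A0) - A0 * (Pi * (A0 * Pi)) - Pi * (A0 * (Pi * A0)) + Pi * (A0 * Pi) := by
    simp only [conjTranspose_sub, conjTranspose_mul, conjTranspose_conjTranspose,
      hPiH, hPH, hAH]
    simp only [Matrix.sub_mul, Matrix.mul_sub, Matrix.mul_assoc]
    simp only [hVVx, hVPVx, hVPV, hViso, Matrix.mul_one, hPiPix, hPPx]
    abel
  have rhs_eq : (Pi * A0 - A0 * Pi)ᴴ * (Pi * A0 - A0 * Pi)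
      = A0 * (Pi * A0) - A0 * (Pi * (A0 * Pi)) - Pi * (A0 * (Pi * A0))
        + Pi * (A0 * (A0 * Pi)) := by
    simp only [conjTranspose_sub, conjTranspose_mul, hPiH, hAH]
    simp only [Matrix.sub_mul, Matrix.mul_sub, Matrix.mul_assoc]
    simp only [hPiPix]
    abel
  rw [show ((V * Pi * Vᴴ * P0 - P0 * (V * Pi * Vᴴ))ᴴ
      * (V * Pi * Vᴴ * P0 - P0 * (V * Pi * Vᴴ)) * (V * σ * Vᴴ)).trace
      = (((V * Pi * Vᴴ * P0 - P0 * (V * Pi * Vᴴ))ᴴ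
      * (V * Pi * Vᴴ * P0 - P0 * (V * Pi * Vᴴ))) * (V * σ * Vᴴ)).trace from rfl,
    tr_conj, ← Matrix.mul_assoc, Matrix.mul_assoc Vᴴ, lhs_eq, rhs_eq]
  have h3 : ((Pi * (A0 * Pi)) * σ).trace = (A0 * σ).trace := by
    simp only [Matrix.mul_assoc]
    rw [hPis, trace_mul_comm]
    simp only [Matrix.mul_assoc]
    rw [hsPi]
  have h4 : ((Pi * (A0 * (A0 * Pi))) * σ).trace = (A0 * (A0 * σ)).trace := by
    simp only [Matrix.mul_assoc]
    rw [hPis, trace_mul_comm]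
    simp only [Matrix.mul_assoc]
    rw [hsPi]
  have h5 : ((1 - A0)ᴴ * A0 * σ).trace = (A0 * σ).trace - (A0 * (A0 * σ)).trace := by
    rw [conjTranspose_sub, conjTranspose_one, hAH, Matrix.sub_mul, Matrix.sub_mul,
      Matrix.one_mul, trace_sub]
    simp only [Matrix.mul_assoc]
  simp only [Matrix.sub_mul, Matrix.add_mul, trace_sub, trace_add]
  rw [h3, h4, h5]
  ring
end
end

section
/- Hölder-type bound for the trine functional: let $T_0=\frac12 Z$, $T_1=\frac12(-\frac12 Z+\frac{\sqrt3}{2}X)$, $T_2=\frac12(-\frac12 Z-\frac{\sqrt3}{2}X)$ be $2\times 2$ Hermitian matrices and let $\{G_j\}_{j=0}^2$ be any POVM on $\mathbb{C}^2$. Then $\sum_{j=0}^2 \operatorname{Tr}(T_j G_j) \le 1$, and equality holds if and only if $G_j = \frac{2}{3}\,\Pi_j$ where $\Pi_j$ is the rank-one projection onto the $+\frac12$-eigenspace of $T_j$; i.e., $G_0=\frac13(\mathbb{1}+Z)$, $G_1=\frac13(\mathbb{1}-\frac12 Z+\frac{\sqrt3}{2}X)$, $G_2=\frac13(\mathbb{1}-\frac12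 Z-\frac{\sqrt3}{2}X)$. -/
open Matrix ComplexOrder
noncomputable section

lemma psd_entries' (M : Matrix (Fin 2) (Fin 2) ℂ) (h : M.PosSemidef) :
    ∃ a d r i : ℝ, 0 ≤ a ∧ 0 ≤ d ∧ r^2 + i^2 ≤ a*d ∧
      M 0 0 = (a:ℂ) ∧ M 1 1 = (d:ℂ) ∧ M 0 1 = (r:ℂ) + (i:ℂ)*Complex.I ∧
      M 1 0 = (r:ℂ) - (i:ℂ)*Complex.I := by
  have herm := h.1
  have h10 : M 1 0 = star (M 0 1) := by
    conv_lhs => rw [← herm]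
    simp [conjTranspose_apply]
  have h00 : star (M 0 0) = M 0 0 := by
    conv_rhs => rw [← herm]
    simp [conjTranspose_apply]
  have h11 : star (M 1 1) = M 1 1 := by
    conv_rhs => rw [← herm]
    simp [conjTranspose_apply]
  set a := (M 0 0).re
  set d := (M 1 1).re
  set r := (M 0 1).re
  set i := (M 0 1).im
  have e00 : M 0 0 = (a:ℂ) := (Complex.conj_eq_iff_re.mp h00).symm
  have e11 : M 1 1 = (d:ℂ) := (Complex.conj_eq_iff_re.mp h11).symm
  have e01 : M 0 1 = (r:ℂ) + (i:ℂ)*Complex.I := (Complex.re_add_im _).symm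
  have e10 : M 1 0 = (r:ℂ) - (i:ℂ)*Complex.I := by
    rw [h10, e01]; simp [Complex.ext_iff]
  have ha : 0 ≤ a := by
    have h2 := h.dotProduct_mulVec_nonneg ![1,0]
    simp [dotProduct, mulVec, Fin.sum_univ_two, Complex.le_def, e00] at h2
    exact h2
  have hd : 0 ≤ d := by
    have h2 := h.dotProduct_mulVec_nonneg ![0,1]
    simp [dotProduct, mulVec, Fin.sum_univ_two, Complex.le_def, e11] at h2
    exact h2
  have key : ∀ c : ℝ, 0 ≤ (a*(r^2+i^2))*(c*c) + (2*(r^2+i^2))*c + d := by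
    intro c
    have h2 := h.dotProduct_mulVec_nonneg ![(c:ℂ)*(M 0 1), 1]
    rw [Complex.le_def] at h2
    simp [dotProduct, mulVec, Fin.sum_univ_two, e00, e11, e01, e10, Complex.ext_iff,
      Complex.normSq] at h2
    obtain ⟨h2, -⟩ := h2
    nlinarith [h2]
  have hq : r^2 + i^2 ≤ a*d := by
    have hdisc := discrim_le_zero key
    have hqn : 0 ≤ r^2 + i^2 := by positivity
    rw [discrim] at hdisc
    rcases eq_or_lt_of_le hqn with hq0 | hq0
    · nlinarith
    · nlinarith
  exact ⟨a, d, r, i, ha, hd, hq, e00, e11, e01, e10⟩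

lemma trine_key' (a d r s : ℝ) (hs : s^2 = 3) (ha : 0 ≤ a) (hd : 0 ≤ d)
    (hr : r^2 ≤ a*d) : 2*s*r ≤ 3*a + d := by
  rcases eq_or_lt_of_le (by linarith : (0:ℝ) ≤ a + d) with h0 | h0
  · have haz : a = 0 := by linarith
    have hdz : d = 0 := by linarith
    have : r = 0 := by nlinarith [sq_nonneg r]
    simp [this, haz, hdz]
  · have hsa : s^2*a^2 = 3*a^2 := by rw [hs]
    have hsd : s^2*d^2 = 3*d^2 := by rw [hs]
    have h1 : 0 ≤ a*(3*a + d - 2*s*r) := by nlinarith [sq_nonneg (r - s*a), hr, hsa]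
    have h2 : 0 ≤ d*(3*a + d - 2*s*r) := by nlinarith [sq_nonneg (3*r - s*d), hr, hsd]
    nlinarith [h1, h2]


lemma trine_zero_extract (a d r i : ℝ) (ha : 0 ≤ a) (hq : r^2 + i^2 ≤ a*d)
    (hd : d = 0) : r = 0 ∧ i = 0 := by
  subst hd
  constructor
  · nlinarith [sq_nonneg r, sq_nonneg i]
  · nlinarith [sq_nonneg r, sq_nonneg i]

lemma trine_eq_extract (a d r i s : ℝ) (hs : s^2 = 3)
    (hq : r^2 + i^2 ≤ a*d) (hE : 2*s*r = 3*a + d) :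
    d = 3*a ∧ i = 0 ∧ r = s*a := by
  have hsq : (2*s*r)^2 = (3*a+d)^2 := by rw [hE]
  have h4 : 4*s^2*r^2 = 12*r^2 := by rw [hs]; ring
  have hmain : (3*a - d)^2 + 12*i^2 ≤ 0 := by nlinarith [hsq, h4, hq]
  have hd3 : d = 3*a := by
    have h1 : (3*a - d)^2 = 0 := le_antisymm (by nlinarith [sq_nonneg i]) (sq_nonneg _)
    have := sq_eq_zero_iff.mp h1
    linarith
  have hi : i = 0 := by
    have h1 : i^2 = 0 := le_antisymm (by nlinarith [sq_nonneg (3*a - d)]) (sq_nonneg _)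
    exact sq_eq_zero_iff.mp h1
  refine ⟨hd3, hi, ?_⟩
  have h1 : s*r = 3*a := by rw [hd3] at hE; linarith
  have h2 : 3*r = 3*(s*a) := by
    calc 3*r = s^2*r := by rw [hs]
    _ = s*(s*r) := by ring
    _ = s*(3*a) := by rw [h1]
    _ = 3*(s*a) := by ring
  linarith

set_option maxHeartbeats 2000000 in
/-- Hölder-type bound for the trine functional: for any POVM
`{G_j}` on `ℂ²`, `∑ⱼ Tr(Tⱼ Gⱼ) ≤ 1`, with equality iff `Gⱼ` is the trine POVM
`G₀ = (1/3)(𝟙 + Z)`, `G₁ = (1/3)(𝟙 - Z/2 + (√3/2)X)`,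
`G₂ = (1/3)(𝟙 - Z/2 - (√3/2)X)`. -/
theorem trine_functional_holder_bound
    (X Z : Matrix (Fin 2) (Fin 2) ℂ)
    (hX : X = !![0, 1; 1, 0]) (hZ : Z = !![1, 0; 0, -1])
    (T : Fin 3 → Matrix (Fin 2) (Fin 2) ℂ)
    (hT0 : T 0 = (1 / 2 : ℂ) • Z)
    (hT1 : T 1 = (1 / 2 : ℂ) • (-(1 / 2 : ℂ) • Z + ((Real.sqrt 3 / 2 : ℝ) : ℂ) • X))
    (hT2 : T 2 = (1 / 2 : ℂ) • (-(1 / 2 : ℂ) • Z - ((Real.sqrt 3 / 2 : ℝ) : ℂ) • X))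
    (G : Fin 3 → Matrix (Fin 2) (Fin 2) ℂ)
    (hG : ∀ j, (G j).PosSemidef) (hGsum : ∑ j, G j = 1) :
    (∑ j, (T j * G j).trace).re ≤ 1 ∧
    ((∑ j, (T j * G j).trace).re = 1 ↔
      (G 0 = (1 / 3 : ℂ) • ((1 : Matrix (Fin 2) (Fin 2) ℂ) + Z) ∧
       G 1 = (1 / 3 : ℂ) • ((1 : Matrix (Fin 2) (Fin 2) ℂ)
          - (1 / 2 : ℂ) • Z + ((Real.sqrt 3 / 2 : ℝ) : ℂ) • X) ∧
       G 2 = (1 / 3 : ℂ) • ((1 : Matrix (Fin 2) (Fin 2) ℂ)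
          - (1 / 2 : ℂ) • Z - ((Real.sqrt 3 / 2 : ℝ) : ℂ) • X))) := by
  set s := Real.sqrt 3 with hsdef
  have hs2 : s^2 = 3 := Real.sq_sqrt (by norm_num)
  have hspos : 0 < s := Real.sqrt_pos.mpr (by norm_num)
  obtain ⟨a0, d0, r0, i0, ha0, hd0, hq0, e000, e011, e001, e010⟩ := psd_entries' _ (hG 0)
  obtain ⟨a1, d1, r1, i1, ha1, hd1, hq1, e100, e111, e101, e110⟩ := psd_entries' _ (hG 1)
  obtain ⟨a2, d2, r2, i2, ha2, hd2, hq2, e200, e211, e201, e210⟩ := psd_entries' _ (hG 2)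
  -- entrywise sum constraints
  have hc : ∀ i j, G 0 i j + G 1 i j + G 2 i j = (1 : Matrix (Fin 2) (Fin 2) ℂ) i j := by
    intro i j
    rw [← hGsum]
    simp [Matrix.sum_apply, Fin.sum_univ_three]
  have s00 : a0 + a1 + a2 = 1 := by
    have h := hc 0 0
    rw [e000, e100, e200] at h
    simp [Matrix.one_apply] at h
    exact_mod_cast h
  have s11 : d0 + d1 + d2 = 1 := by
    have h := hc 1 1
    rw [e011, e111, e211] at h
    simp [Matrix.one_apply] at h
    exact_mod_cast h
  have s01 : r0 + r1 + r2 = 0 ∧ i0 + i1 + i2 = 0 := by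
    have h := hc 0 1
    rw [e001, e101, e201] at h
    simp [Matrix.one_apply, Complex.ext_iff] at h
    exact_mod_cast h
  -- trace formula
  have hS : (∑ j, (T j * G j).trace).re
      = (1/2)*(a0-d0) - (1/4)*(a1-d1) + (s/2)*r1
        - (1/4)*(a2-d2) - (s/2)*r2 := by
    rw [Fin.sum_univ_three, hT0, hT1, hT2, hX, hZ]
    simp [Matrix.trace, Matrix.mul_apply, Matrix.vecMul, dotProduct,
      Fin.sum_univ_two, Matrix.smul_apply,
      e000, e011, e001, e010, e100, e111, e101, e110, e200, e211, e201, e210]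
    ring
  have k1 : 2*s*r1 ≤ 3*a1 + d1 :=
    trine_key' a1 d1 r1 s hs2 ha1 hd1 (by nlinarith [sq_nonneg i1])
  have k2 : 2*s*(-r2) ≤ 3*a2 + d2 :=
    trine_key' a2 d2 (-r2) s hs2 ha2 hd2 (by nlinarith [sq_nonneg i2])
  have hineq : (∑ j, (T j * G j).trace).re ≤ 1 := by
    rw [hS]; linarith [k1, k2, hd0, s00, s11]
  refine ⟨hineq, ?_, ?_⟩
  · -- equality ⟹ trine POVM
    intro heq
    rw [hS] at heq
    have hd0z : d0 = 0 := by linarith [k1, k2, s00, s11]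
    have hE1 : 2*s*r1 = 3*a1 + d1 := by linarith [k2, s00, s11]
    have hE2 : 2*s*r2 = -(3*a2 + d2) := by linarith [k1, s00, s11]
    obtain ⟨hr0, hi0⟩ := trine_zero_extract a0 d0 r0 i0 ha0 hq0 hd0z
    obtain ⟨hd13, hi1, hr1⟩ := trine_eq_extract a1 d1 r1 i1 s hs2 hq1 hE1
    obtain ⟨hd23, hi2, hr2'⟩ := trine_eq_extract a2 d2 (-r2) i2 s hs2
      (by nlinarith [hq2]) (by linarith [hE2])
    have hr2 : r2 = -(s*a2) := by linarith [hr2']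
    -- solve for the values
    have ha12 : a1 = a2 := by
      have h := s01.1
      rw [hr0, hr1, hr2] at h
      have : s*(a1 - a2) = 0 := by linarith
      rcases mul_eq_zero.mp this with h' | h'
      · exact absurd h' (ne_of_gt hspos)
      · linarith
    have ha1v : a1 = 1/6 := by
      have := s11
      rw [hd0z, hd13, hd23, ha12] at this
      linarith
    have ha2v : a2 = 1/6 := by rw [← ha12]; exact ha1v
    have ha0v : a0 = 2/3 := by
      have := s00
      rw [ha1v, ha2v] at this
      linarith
    refine ⟨?_, ?_, ?_⟩
    · ext i j
      fin_cases i <;> fin_cases j <;>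
        simp [hZ, e000, e011, e001, e010, ha0v, hd0z, hr0, hi0, Matrix.one_apply] <;>
        norm_num
    · ext i j
      fin_cases i <;> fin_cases j <;>
        simp [hX, hZ, e100, e111, e101, e110, ha1v, hd13, hr1, hi1, Matrix.one_apply] <;>
        push_cast <;> ring_nf <;> norm_num [ha1v]
    · ext i j
      fin_cases i <;> fin_cases j <;>
        simp [hX, hZ, e200, e211, e201, e210, ha2v, hd23, hr2, hi2, Matrix.one_apply] <;>
        push_cast <;> ring_nf <;> norm_num [ha2v]
  · -- trine POVM ⟹ equality
    rintro ⟨hG0, hG1, hG2⟩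
    have v000 : (a0:ℂ) = ((2/3 : ℝ):ℂ) := by
      rw [← e000, hG0, hZ]; simp <;> norm_num
    have v011 : (d0:ℂ) = ((0:ℝ):ℂ) := by
      rw [← e011, hG0, hZ]; simp <;> norm_num
    have v100 : (a1:ℂ) = ((1/6 : ℝ):ℂ) := by
      rw [← e100, hG1, hX, hZ]; simp <;> norm_num
    have v111 : (d1:ℂ) = ((1/2 : ℝ):ℂ) := by
      rw [← e111, hG1, hX, hZ]; simp <;> norm_num
    have v200 : (a2:ℂ) = ((1/6 : ℝ):ℂ) := by
      rw [← e200, hG2, hX, hZ]; simp <;> norm_num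
    have v211 : (d2:ℂ) = ((1/2 : ℝ):ℂ) := by
      rw [← e211, hG2, hX, hZ]; simp <;> norm_num
    have v101 : (r1:ℂ) + (i1:ℂ)*Complex.I = ((s/6 : ℝ):ℂ) := by
      rw [← e101, hG1, hX, hZ]; simp; push_cast; ring
    have v201 : (r2:ℂ) + (i2:ℂ)*Complex.I = ((-(s/6) : ℝ):ℂ) := by
      rw [← e201, hG2, hX, hZ]; simp; push_cast; ring
    have ha0v : a0 = 2/3 := by exact_mod_cast v000
    have hd0v : d0 = 0 := by exact_mod_cast v011
    have ha1v : a1 = 1/6 := by exact_mod_cast v100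
    have hd1v : d1 = 1/2 := by exact_mod_cast v111
    have ha2v : a2 = 1/6 := by exact_mod_cast v200
    have hd2v : d2 = 1/2 := by exact_mod_cast v211
    have hr1v : r1 = s/6 := by
      have := v101
      simp [Complex.ext_iff] at this
      exact this.1
    have hr2v : r2 = -(s/6) := by
      have := v201
      simp [Complex.ext_iff] at this
      exact this.1
    rw [hS, ha0v, hd0v, ha1v, hd1v, ha2v, hd2v, hr1v, hr2v]
    linear_combination (1/6 : ℝ) * hs2
end
end

section
/- Let $\{R_{ij}\}_{j}$, $1\le i\le n$, be a family of POVMs on a finite-dimensional Hilbert space $\mathcal{H}$ such that all measurements with $i\ne 1$ are projective, and let $(\{P_{ij}\},V)$ be any Naimark dilation (the $\{P_{ij}\}_j$ are PVMs, $V$ an isometry, $V^*P_{ij}V=R_{ij}$). Then for every $i\ne 1$, every $j$, and every $\ket{\psi}\in\mathcal{H}$: $P_{ij}V\ket{\psi} = V R_{ij}\ket{\psi}$. -/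
open Matrix ComplexOrder
noncomputable section

/-- For a family of POVMs all of which are projective except
possibly the one indexed by `i₁`, any Naimark dilation acts exactly on the
projective ones: `P_{ij} V ψ = V R_{ij} ψ` for all `i ≠ i₁`. -/
theorem naimark_dilation_exact_on_projective_measurements
    {n n' ι κ : Type*} [Fintype n] [Fintype n'] [Fintype ι] [Fintype κ]
    [DecidableEq n] [DecidableEq n']
    (i₁ : ι)
    (R : ι → κ → Matrix n n ℂ) (hR : ∀ i j, (R i j).PosSemidef)
    (hRsum : ∀ i, ∑ j, R i j = 1)
    (hRproj : ∀ i, i ≠ i₁ → ∀ j, R i j * R i j = R i j)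
    (P : ι → κ → Matrix n' n' ℂ)
    (hPproj : ∀ i j, (P i j).IsHermitian ∧ P i j * P i j = P i j)
    (hPsum : ∀ i, ∑ j, P i j = 1)
    (V : Matrix n' n ℂ) (hViso : Vᴴ * V = 1)
    (hdil : ∀ i j, Vᴴ * P i j * V = R i j) :
    ∀ i, i ≠ i₁ → ∀ j, ∀ ψ : n → ℂ,
      P i j *ᵥ (V *ᵥ ψ) = V *ᵥ (R i j *ᵥ ψ) := by
  intro i hi j ψ
  have hPH := (hPproj i j).1
  have hPP := (hPproj i j).2
  have hRH : (R i j)ᴴ = R i j := (hR i j).1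
  have hVPV : Vᴴ * P i j * V = R i j := hdil i j
  have hRR : R i j * R i j = R i j := hRproj i hi j
  have key : P i j * V = V * R i j := by
    have hA : Vᴴ * P i j * (P i j * V) = R i j := by
      rw [Matrix.mul_assoc, ← Matrix.mul_assoc (P i j), hPP, ← Matrix.mul_assoc]; exact hVPV
    have hB : Vᴴ * P i j * (V * R i j) = R i j := by
      rw [← Matrix.mul_assoc, hVPV, hRR]
    have hC : R i j * Vᴴ * (P i j * V) = R i j := by
      rw [Matrix.mul_assoc, ← Matrix.mul_assoc Vᴴ, hVPV, hRR]
    have hD : R i j * Vᴴ * (V * R i j) = R i j := by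
      rw [Matrix.mul_assoc, ← Matrix.mul_assoc Vᴴ, hViso, Matrix.one_mul, hRR]
    have h0 : (P i j * V - V * R i j)ᴴ * (P i j * V - V * R i j) = 0 := by
      rw [conjTranspose_sub, conjTranspose_mul, conjTranspose_mul, hPH.eq, hRH,
          Matrix.sub_mul, Matrix.mul_sub, Matrix.mul_sub, hA, hB, hC, hD]
      simp
    exact sub_eq_zero.mp (Matrix.conjTranspose_mul_self_eq_zero.mp h0)
  rw [mulVec_mulVec, mulVec_mulVec, key]
end
end
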